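/- Let Σ be a forward-complete control system on ℝⁿ with input set 𝖴 = ⋃_{j=1}^J ∏_{i=1}^m [a_i^j, b_i^j] ⊆ ℝᵐ (a_i^j < b_i^j), incrementally forward complete with bounding functions β, γ. Let q = (τ, η, μ, θ) be quantization parameters with τ, η, μ, θ > 0, let ε > 0, and assume μ ≤ μ̂ := min_j min_i (b_i^j − a_i^j) and η ≤ ε ≤ θ. Let D = ⋃_{j=1}^M D_j ⊆ ℝⁿ, where each D_j = ∏_{i=1}^n [c_i^j, d_i^j] with c_i^j < d_i^j and η ≤ min_j min_i (d_i^j − c_i^j). Then the relation R = {(x_{qD}, x) ∈ [D]_η × ℝⁿ : ‖x − x_{qD}‖ ≤ ε} is an ε-approximate alternating simulation relation from the finite system S_{qD}(Σ) to S_τ(Σ); in particular S_{qD}(Σ) ⪯_{AS}^ε S_τ(Σ). -/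

import Mathlib

/-!
Answer a move `u` of `S_{qD}(Σ)` from `x_q` by the same input in `S_τ(Σ)` from `x`. Rounding the
concrete successor `ξ_{xu}(τ)` coordinatewise to the grid `ηℤⁿ` gives `z` with
`‖ξ_{xu}(τ) − z‖ ≤ η/2 ≤ ε`. Since the inputs agree, `δ`-FC gives
`‖ξ_{x_q u}(τ) − ξ_{xu}(τ)‖ ≤ β(‖x_q − x‖, τ) ≤ β(θ, τ)`, so `z` is an `S_q(Σ)`-successor of `x_q`,
and the defining condition of `S_{qD}(Σ)` puts it in `[D]_η`.
-/
open Set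

/-- A class `𝒦∞` function `ℝ≥0 → ℝ≥0`, encoded as a function `ℝ → ℝ` restricted to `[0,∞)`:
continuous, strictly increasing, vanishing at `0`, and tending to `∞`. -/
def IsKInf (g : ℝ → ℝ) : Prop :=
  ContinuousOn g (Set.Ici 0) ∧ StrictMonoOn g (Set.Ici 0) ∧ g 0 = 0 ∧
    Filter.Tendsto g Filter.atTop Filter.atTop

/-- A (metric) system: states `X`, inputs `U`, a transition relation, and an output map into
a metric space `Y`. -/
structure Sys (X U Y : Type*) [MetricSpace Y] where
  trans : X → U → X → Prop
  out : X → Y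

/-- `R` is an `ε`-approximate alternating simulation relation from `Sa` to `Sb`. -/
def IsApproxAltSim {X₁ U₁ X₂ U₂ Y : Type*} [MetricSpace Y]
    (Sa : Sys X₁ U₁ Y) (Sb : Sys X₂ U₂ Y) (ε : ℝ) (R : X₁ → X₂ → Prop) : Prop :=
  (∀ xa, ∃ xb, R xa xb) ∧
  (∀ xa xb, R xa xb → dist (Sa.out xa) (Sb.out xb) ≤ ε) ∧
  (∀ xa xb, R xa xb → ∀ ua, (∃ xa', Sa.trans xa ua xa') →
    ∃ ub, (∃ xb', Sb.trans xb ub xb') ∧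
      ∀ xb', Sb.trans xb ub xb' → ∃ xa', Sa.trans xa ua xa' ∧ R xa' xb')


theorem IsKInf.mono {g : ℝ → ℝ} (hg : IsKInf g) {r s : ℝ} (hr : 0 ≤ r) (hrs : r ≤ s) :
    g r ≤ g s :=
  hg.2.1.monotoneOn hr (hr.trans hrs) hrs

theorem IsKInf.nonneg {g : ℝ → ℝ} (hg : IsKInf g) {r : ℝ} (hr : 0 ≤ r) : 0 ≤ g r :=
  hg.2.2.1 ▸ hg.mono le_rfl hr

theorem abs_sub_round_div_mul_le {η : ℝ} (hη : 0 < η) (x : ℝ) :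
    |x - round (x / η) * η| ≤ η / 2 := by
  have hfactor : x - round (x / η) * η = (x / η - round (x / η)) * η := by field_simp
  rw [hfactor, abs_mul, abs_of_pos hη]
  nlinarith [abs_sub_round (x / η)]

theorem exists_grid_norm_sub_le {ι : Type*} [Fintype ι] {η : ℝ} (hη : 0 < η) (w : ι → ℝ) :
    ∃ z : ι → ℝ, (∀ i, ∃ k : ℤ, z i = k * η) ∧ ‖w - z‖ ≤ η / 2 :=
  ⟨fun i => round (w i / η) * η, fun i => ⟨_, rfl⟩,
    (pi_norm_le_iff_of_nonneg (by positivity)).2 fun i => by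
      simpa only [Pi.sub_apply, Real.norm_eq_abs] using abs_sub_round_div_mul_le hη (w i)⟩

theorem SqD_alt_approx_simulated_by_Stau_general {n mdim : ℕ}
    (U : Set (Fin mdim → ℝ))
    (traj : (Fin n → ℝ) → (Fin mdim → ℝ) → ℝ → (Fin n → ℝ))
    (β γ : ℝ → ℝ → ℝ)
    (hβK : ∀ s > (0:ℝ), IsKInf (fun r => β r s))
    (hγK : ∀ s > (0:ℝ), IsKInf (fun r => γ r s))
    (hFC : ∀ (x x' : Fin n → ℝ), ∀ u ∈ U, ∀ u' ∈ U, ∀ t ≥ (0:ℝ),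
      ‖traj x u t - traj x' u' t‖ ≤ β ‖x - x'‖ t + γ ‖u - u'‖ t)
    (τ η μ θ ε : ℝ)
    (hτ : 0 < τ) (hη : 0 < η) (hμ : 0 < μ) (hε : 0 < ε)
    (hηε : η ≤ ε) (hεθ : ε ≤ θ)
    (D : Set (Fin n → ℝ)) :
    IsApproxAltSim
      -- `S_{qD}(Σ)`
      (⟨fun x (u : {u : Fin mdim → ℝ // u ∈ U ∧ ∀ i, ∃ k : ℤ, u i = k * μ}) x' =>
          ‖traj x.1 u.1 τ - x'.1‖ ≤ β θ τ + γ μ τ + η ∧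
          ∀ z : Fin n → ℝ, (∀ i, ∃ k : ℤ, z i = k * η) →
            ‖traj x.1 u.1 τ - z‖ ≤ β θ τ + γ μ τ + η → z ∈ D,
        fun x => x.1⟩ :
        Sys {p : Fin n → ℝ // p ∈ D ∧ ∀ i, ∃ k : ℤ, p i = k * η}
            {u : Fin mdim → ℝ // u ∈ U ∧ ∀ i, ∃ k : ℤ, u i = k * μ} (Fin n → ℝ))
      -- `S_τ(Σ)`
      (⟨fun x (u : {u : Fin mdim → ℝ // u ∈ U}) x' => x' = traj x u.1 τ, id⟩ :
        Sys (Fin n → ℝ) {u : Fin mdim → ℝ // u ∈ U} (Fin n → ℝ))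
      ε
      (fun xd x => ‖x - xd.1‖ ≤ ε) := by
  refine ⟨fun xq => ⟨xq.1, by simpa using hε.le⟩,
    fun xq x hR => by simpa [dist_eq_norm, norm_sub_rev] using hR, ?_⟩
  rintro xq x hR u ⟨-, -, hsucc_mem_D⟩
  refine ⟨⟨u.1, u.2.1⟩, ⟨_, rfl⟩, ?_⟩
  rintro _ rfl
  obtain ⟨z, hz_grid, hz⟩ := exists_grid_norm_sub_le hη (traj x u.1 τ)
  have hβ : ‖traj xq.1 u.1 τ - traj x u.1 τ‖ ≤ β θ τ := by
    have hγ0 : γ 0 τ = 0 := (hγK τ hτ).2.2.1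
    have hδFC := hFC xq.1 x u.1 u.2.1 u.1 u.2.1 τ hτ.le
    rw [sub_self, norm_zero, hγ0, add_zero] at hδFC
    exact hδFC.trans <| (hβK τ hτ).mono (norm_nonneg _)
      ((norm_sub_rev x xq.1 ▸ hR).trans hεθ)
  have hz_succ : ‖traj xq.1 u.1 τ - z‖ ≤ β θ τ + γ μ τ + η := by
    have hγ := (hγK τ hτ).nonneg hμ.le
    calc ‖traj xq.1 u.1 τ - z‖
        ≤ ‖traj xq.1 u.1 τ - traj x u.1 τ‖ + ‖traj x u.1 τ - z‖ :=
          norm_sub_le_norm_sub_add_norm_sub _ _ _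
      _ ≤ β θ τ + η / 2 := add_le_add hβ hz
      _ ≤ β θ τ + γ μ τ + η := by linarith
  exact ⟨⟨z, hsucc_mem_D z hz_grid hz_succ, hz_grid⟩, ⟨hz_succ, hsucc_mem_D⟩,
    hz.trans (by linarith)⟩

/-- Let `Σ` be a `δ`-FC control system (trajectories `traj x u t = ξ_{xu}(t)`
under constant inputs, bounding functions `β, γ`) with input set `𝖴 = ⋃ⱼ ∏ᵢ [aᵢʲ, bᵢʲ]`.
For quantization parameters `q = (τ,η,μ,θ)` and precision `ε > 0` with `μ ≤ μ̂` and
`η ≤ ε ≤ θ`, and for a compact domain `D = ⋃ⱼ ∏ᵢ [cᵢʲ, dᵢʲ]` with sides of length at least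
`η`, the relation `R = {(x_{qD}, x) : ‖x − x_{qD}‖ ≤ ε}` is an `ε`-approximate alternating
simulation relation from the finite system `S_{qD}(Σ)` to `S_τ(Σ)`; in particular
`S_{qD}(Σ) ⪯_{AS}^ε S_τ(Σ)`. -/
theorem SqD_alt_approx_simulated_by_Stau {n mdim : ℕ}
    (U : Set (Fin mdim → ℝ))
    (J : ℕ) (hJ : 0 < J) (a b : Fin J → (Fin mdim → ℝ))
    (hab : ∀ j i, a j i < b j i)
    (hU : U = ⋃ j, Set.Icc (a j) (b j))
    (traj : (Fin n → ℝ) → (Fin mdim → ℝ) → ℝ → (Fin n → ℝ))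
    (htraj0 : ∀ x u, traj x u 0 = x)
    (β γ : ℝ → ℝ → ℝ)
    (hβc : Continuous (Function.uncurry β)) (hγc : Continuous (Function.uncurry γ))
    (hβK : ∀ s > (0:ℝ), IsKInf (fun r => β r s))
    (hγK : ∀ s > (0:ℝ), IsKInf (fun r => γ r s))
    (hFC : ∀ (x x' : Fin n → ℝ), ∀ u ∈ U, ∀ u' ∈ U, ∀ t ≥ (0:ℝ),
      ‖traj x u t - traj x' u' t‖ ≤ β ‖x - x'‖ t + γ ‖u - u'‖ t)
    (τ η μ θ ε : ℝ)
    (hτ : 0 < τ) (hη : 0 < η) (hμ : 0 < μ) (hθ : 0 < θ) (hε : 0 < ε)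
    (hμhat : ∀ j i, μ ≤ b j i - a j i)
    (hηε : η ≤ ε) (hεθ : ε ≤ θ)
    (M : ℕ) (hM : 0 < M) (cc dd : Fin M → Fin n → ℝ)
    (hcd : ∀ j i, cc j i < dd j i)
    (D : Set (Fin n → ℝ)) (hD : D = ⋃ j, Set.Icc (cc j) (dd j))
    (hηD : ∀ j i, η ≤ dd j i - cc j i) :
    IsApproxAltSim
      -- `S_{qD}(Σ)`
      (⟨fun x (u : {u : Fin mdim → ℝ // u ∈ U ∧ ∀ i, ∃ k : ℤ, u i = k * μ}) x' =>
          ‖traj x.1 u.1 τ - x'.1‖ ≤ β θ τ + γ μ τ + η ∧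
          ∀ z : Fin n → ℝ, (∀ i, ∃ k : ℤ, z i = k * η) →
            ‖traj x.1 u.1 τ - z‖ ≤ β θ τ + γ μ τ + η → z ∈ D,
        fun x => x.1⟩ :
        Sys {p : Fin n → ℝ // p ∈ D ∧ ∀ i, ∃ k : ℤ, p i = k * η}
            {u : Fin mdim → ℝ // u ∈ U ∧ ∀ i, ∃ k : ℤ, u i = k * μ} (Fin n → ℝ))
      -- `S_τ(Σ)`
      (⟨fun x (u : {u : Fin mdim → ℝ // u ∈ U}) x' => x' = traj x u.1 τ, id⟩ :
        Sys (Fin n → ℝ) {u : Fin mdim → ℝ // u ∈ U} (Fin n → ℝ))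
      ε
      (fun xd x => ‖x - xd.1‖ ≤ ε) :=
  SqD_alt_approx_simulated_by_Stau_general U traj β γ hβK hγK hFC τ η μ θ ε hτ hη hμ hε hηε hεθ D
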